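/- Let Q ⊆ ℝ^n be an n-dimensional lattice polytope containing the origin in its interior and let k ≥ 1 be an integer. For d ≥ 1 let R_d := Q ⊕ S_d ⊕ ⋯ ⊕ S_d (iterated free sum with k copies of S_d) ⊆ ℝ^{n+kd}. Then there exists a formal power series F ∈ ℤ[[X]] with (1−X)^k·F(X) = (1−X)^{n+1}·Ehr_Q(X) such that for every j ≥ 0 there is an N with: for all d ≥ N, the coefficient of X^j in (1−X)^{n+kd+1}·Ehr_{R_d}(X) equals the X^j-coefficient of F. In other words, the h*-polynomials of the sequence (R_d) converge coefficientwise to h*(Q;X)/(1−X)^k in ℤ[[X]]. -/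

import Mathlib

open scoped BigOperators Pointwise

/-- Ehrhart series of a (bounded) set `P ⊆ ℝ^n`: the coefficient of `X^t` is the
number of lattice points of `ℤ^n` in the dilate `t • P`. -/
noncomputable def ehrhartSeries {n : ℕ} (P : Set (Fin n → ℝ)) : PowerSeries ℤ :=
  PowerSeries.mk fun t =>
    (Set.ncard {x : Fin n → ℤ | (fun i => (x i : ℝ)) ∈ (t : ℝ) • P} : ℤ)

/-- `P` is a lattice polytope: the convex hull of finitely many integer points. -/
def IsLatticePolytope {n : ℕ} (P : Set (Fin n → ℝ)) : Prop :=
  ∃ V : Finset (Fin n → ℤ),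
    P = convexHull ℝ ((fun v : Fin n → ℤ => fun i => (v i : ℝ)) '' ↑V)

/-- The free sum `P ⊕ Q ⊆ ℝ^{p+q}`. -/
noncomputable def freeSum {p q : ℕ} (P : Set (Fin p → ℝ)) (Q : Set (Fin q → ℝ)) :
    Set (Fin (p + q) → ℝ) :=
  convexHull ℝ
    ((fun x : Fin p → ℝ => Fin.append x (0 : Fin q → ℝ)) '' P ∪
     (fun y : Fin q → ℝ => Fin.append (0 : Fin p → ℝ) y) '' Q)

/-- The reflexive simplex `S_d = conv{e_1, …, e_d, -(e_1 + ⋯ + e_d)} ⊆ ℝ^d`. -/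
noncomputable def Ssimplex (d : ℕ) : Set (Fin d → ℝ) :=
  convexHull ℝ
    ((Set.range fun i : Fin d => fun j : Fin d => if j = i then (1 : ℝ) else 0) ∪
      {fun _ : Fin d => (-1 : ℝ)})

/-- Iterated free sum `Q ⊕ S_d ⊕ ⋯ ⊕ S_d` with `k` copies of `S_d`. -/
noncomputable def iterFreeSum {n : ℕ} (Q : Set (Fin n → ℝ)) (d : ℕ) :
    (k : ℕ) → Set (Fin (n + k * d) → ℝ)
  | 0 => cast (by rw [Nat.zero_mul, Nat.add_zero]) Q
  | k + 1 => cast (by rw [show n + k * d + d = n + (k + 1) * d from by ring])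
      (freeSum (iterFreeSum Q d k) (Ssimplex d))

/-!
Braun's formula: if the lattice gauge `g` of `Q` is integral, a lattice point `(x, y)` lies in
`t • (P ⊕ Q)` iff `g y ≤ t` and `x ∈ (t - g y) • P`, whence `h*(P ⊕ Q) = h*(P) · h*(Q)`. The
simplex `S_d` has integral gauge, so `h*(R_d) = h*(Q) · h*(S_d)^k`. For `m ≤ d`, the map
`w ↦ (w_i - w_d)_i` is a bijection from `{w ∈ ℕ^{d+1} | ∑ w ≤ m}` onto the lattice points of
`m • S_d` (two preimages differ by a constant, which would change `∑ w` by a multiple of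
`d + 1`). Hence `Ehr_{S_d} ≡ 1 / (1 - X)^{d+2}` and `h*(S_d) ≡ 1 / (1 - X)` modulo `X^{d+1}`,
so `h*(R_d) ≡ h*(Q) / (1 - X)^k` modulo `X^{d+1}`.
-/

open PowerSeries

lemma Convex.smul_subset_smul_of_le {E : Type*} [AddCommGroup E] [Module ℝ E] {P : Set E}
    (hP : Convex ℝ P) (hP0 : (0 : E) ∈ P) {a b : ℝ} (ha : 0 ≤ a) (hab : a ≤ b) :
    a • P ⊆ b • P := by
  have hsplit := hP.add_smul ha (sub_nonneg.2 hab)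
  rw [add_sub_cancel] at hsplit
  rw [hsplit]
  exact Set.subset_add_left _ (Set.zero_mem_smul_set hP0)

def castVec {p : ℕ} (x : Fin p → ℤ) : Fin p → ℝ := fun i => x i

section LatticePoints

variable {p : ℕ}

lemma isometry_castVec : Isometry (castVec (p := p)) :=
  Isometry.of_nndist_eq fun _ _ => rfl

lemma finite_setOf_castVec_mem {B : Set (Fin p → ℝ)} (hB : Bornology.IsBounded B) :
    {x | castVec x ∈ B}.Finite :=
  (Metric.isCompact_of_isClosed_isBounded (isClosed_discrete _)
    (isometry_castVec.antilipschitz.isBounded_preimage hB)).finite_of_discrete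

lemma coeff_ehrhartSeries (P : Set (Fin p → ℝ)) (t : ℕ) :
    coeff t (ehrhartSeries P) = ({x | castVec x ∈ (t : ℝ) • P}.ncard : ℤ) := by
  simp only [ehrhartSeries, coeff_mk]
  rfl

lemma castVec_append {q : ℕ} (x : Fin p → ℤ) (y : Fin q → ℤ) :
    castVec (Fin.append x y) = Fin.append (castVec x) (castVec y) :=
  funext fun i => Fin.addCases (by simp [castVec]) (by simp [castVec]) i

end LatticePoints

lemma ncard_setOf_sum_eq (q m : ℕ) :
    {v : Fin q → ℕ | ∑ i, v i = m}.ncard = (q + m - 1).choose m := by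
  rw [← Nat.card_coe_set_eq, Set.coe_ofPred, ← Nat.card_congr (Sym.equivNatSumOfFintype _ m),
    Nat.card_eq_fintype_card, Sym.card_sym_eq_choose, Fintype.card_fin]

lemma ncard_setOf_sum_le (q m : ℕ) :
    {w : Fin q → ℕ | ∑ i, w i ≤ m}.ncard = (q + m).choose m := by
  have hinj : Set.InjOn Fin.init {v : Fin (q + 1) → ℕ | ∑ i, v i = m} := by
    intro v hv v' hv' h
    have hinit : ∑ i : Fin q, v i.castSucc = ∑ i : Fin q, v' i.castSucc :=
      congrArg (fun u => ∑ i, u i) h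
    simp only [Set.mem_ofPred_eq, Fin.sum_univ_castSucc] at hv hv'
    have hlast : v (Fin.last q) = v' (Fin.last q) := by omega
    rw [← Fin.snoc_init_self v, ← Fin.snoc_init_self v', h, hlast]
  have himage : Fin.init '' {v : Fin (q + 1) → ℕ | ∑ i, v i = m} = {w | ∑ i, w i ≤ m} := by
    ext w
    constructor
    · rintro ⟨v, hv, rfl⟩
      simp only [Set.mem_ofPred_eq, Fin.sum_univ_castSucc] at hv ⊢
      exact hv ▸ Nat.le_add_right _ _
    · intro hw
      refine ⟨Fin.snoc w (m - ∑ i, w i), ?_, Fin.init_snoc _ _⟩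
      simp only [Set.mem_ofPred_eq, Fin.sum_univ_castSucc, Fin.snoc_castSucc, Fin.snoc_last]
      exact Nat.add_sub_cancel' hw
  rw [← himage, hinj.ncard_image, ncard_setOf_sum_eq]
  congr 1
  omega

section FreeSum

variable {p q : ℕ}

def appendLinearEquiv (p q : ℕ) : ((Fin p → ℝ) × (Fin q → ℝ)) ≃ₗ[ℝ] (Fin (p + q) → ℝ) :=
  { Fin.appendEquiv p q with
    map_add' := fun _ _ => funext fun i => Fin.addCases (by simp) (by simp) i
    map_smul' := fun _ _ => funext fun i => Fin.addCases (by simp) (by simp) i }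

def freeSumInl (p q : ℕ) : (Fin p → ℝ) →ₗ[ℝ] (Fin (p + q) → ℝ) :=
  (appendLinearEquiv p q).toLinearMap ∘ₗ LinearMap.inl ℝ _ _

def freeSumInr (p q : ℕ) : (Fin q → ℝ) →ₗ[ℝ] (Fin (p + q) → ℝ) :=
  (appendLinearEquiv p q).toLinearMap ∘ₗ LinearMap.inr ℝ _ _

lemma freeSum_eq_convexHull (P : Set (Fin p → ℝ)) (Q : Set (Fin q → ℝ)) :
    freeSum P Q = convexHull ℝ (freeSumInl p q '' P ∪ freeSumInr p q '' Q) :=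
  rfl

lemma append_eq_freeSumInl_add_freeSumInr (x : Fin p → ℝ) (y : Fin q → ℝ) :
    Fin.append x y = freeSumInl p q x + freeSumInr p q y := by
  simp only [freeSumInl, freeSumInr, LinearMap.comp_apply, LinearMap.inl_apply,
    LinearMap.inr_apply, LinearEquiv.coe_coe, ← map_add, Prod.mk_add_mk, add_zero, zero_add]
  rfl

lemma smul_freeSum (t : ℝ) (P : Set (Fin p → ℝ)) (Q : Set (Fin q → ℝ)) :
    t • freeSum P Q = freeSum (t • P) (t • Q) := by
  rw [freeSum_eq_convexHull, freeSum_eq_convexHull, ← convexHull_smul, Set.smul_set_union,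
    image_smul_set, image_smul_set]

lemma convex_freeSum (P : Set (Fin p → ℝ)) (Q : Set (Fin q → ℝ)) : Convex ℝ (freeSum P Q) :=
  convex_convexHull ℝ _

lemma zero_mem_freeSum {P : Set (Fin p → ℝ)} (Q : Set (Fin q → ℝ)) (hP : (0 : Fin p → ℝ) ∈ P) :
    (0 : Fin (p + q) → ℝ) ∈ freeSum P Q := by
  rw [freeSum_eq_convexHull]
  exact subset_convexHull ℝ _ (Or.inl ⟨0, hP, map_zero _⟩)

lemma isBounded_freeSum {P : Set (Fin p → ℝ)} {Q : Set (Fin q → ℝ)}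
    (hP : Bornology.IsBounded P) (hQ : Bornology.IsBounded Q) :
    Bornology.IsBounded (freeSum P Q) :=
  isBounded_convexHull.2 <|
    ((freeSumInl p q).toContinuousLinearMap.lipschitz.isBounded_image hP).union
      ((freeSumInr p q).toContinuousLinearMap.lipschitz.isBounded_image hQ)

lemma append_mem_smul_freeSum_iff {P : Set (Fin p → ℝ)} {Q : Set (Fin q → ℝ)}
    (hP : Convex ℝ P) (hQ : Convex ℝ Q) (hPne : P.Nonempty) (hQne : Q.Nonempty) {t : ℝ}
    (ht : 0 ≤ t) (x : Fin p → ℝ) (y : Fin q → ℝ) :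
    Fin.append x y ∈ t • freeSum P Q ↔
      ∃ a b : ℝ, 0 ≤ a ∧ 0 ≤ b ∧ a + b = t ∧ x ∈ a • P ∧ y ∈ b • Q := by
  constructor
  · rw [smul_freeSum, freeSum_eq_convexHull,
      convexHull_union ((hPne.smul_set).image _) ((hQne.smul_set).image _),
      ((hP.smul t).linear_image _).convexHull_eq, ((hQ.smul t).linear_image _).convexHull_eq,
      mem_convexJoin]
    rintro ⟨_, ⟨x', hx', rfl⟩, _, ⟨y', hy', rfl⟩, a, b, ha, hb, hab, hxy⟩
    have hxy' : Fin.append (a • x') (b • y') = Fin.append x y := by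
      rw [append_eq_freeSumInl_add_freeSumInr (a • x'), map_smul, map_smul]
      exact hxy
    obtain ⟨rfl, rfl⟩ := Prod.mk.inj
      ((Fin.appendEquiv p q).injective (a₁ := (a • x', b • y')) (a₂ := (x, y)) hxy')
    refine ⟨a * t, b * t, mul_nonneg ha ht, mul_nonneg hb ht, by rw [← add_mul, hab, one_mul],
      ?_, ?_⟩
    · rw [← smul_smul]; exact Set.smul_mem_smul_set hx'
    · rw [← smul_smul]; exact Set.smul_mem_smul_set hy'
  · rintro ⟨a, b, ha, hb, rfl, ⟨x', hx', rfl⟩, ⟨y', hy', rfl⟩⟩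
    rw [(convex_freeSum P Q).add_smul ha hb, append_eq_freeSumInl_add_freeSumInr, map_smul,
      map_smul]
    exact Set.add_mem_add (Set.smul_mem_smul_set (subset_convexHull ℝ _ (Or.inl ⟨x', hx', rfl⟩)))
      (Set.smul_mem_smul_set (subset_convexHull ℝ _ (Or.inr ⟨y', hy', rfl⟩)))

end FreeSum

/-- `g` is the gauge function of `Q` on lattice points, and it is integer valued (as for
reflexive polytopes). -/
def IsIntegralGauge {q : ℕ} (Q : Set (Fin q → ℝ)) (g : (Fin q → ℤ) → ℕ) : Prop :=
  ∀ (y : Fin q → ℤ) (μ : ℝ), 0 ≤ μ → (castVec y ∈ μ • Q ↔ (g y : ℝ) ≤ μ)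

namespace IsIntegralGauge

variable {p q : ℕ} {Q : Set (Fin q → ℝ)} {g : (Fin q → ℤ) → ℕ}

lemma castVec_mem_natCast_smul_iff (hg : IsIntegralGauge Q g) (y : Fin q → ℤ) (m : ℕ) :
    castVec y ∈ (m : ℝ) • Q ↔ g y ≤ m := by
  rw [hg y m m.cast_nonneg, Nat.cast_le]

lemma finite_setOf_le (hg : IsIntegralGauge Q g) (hQ : Bornology.IsBounded Q) (m : ℕ) :
    {y | g y ≤ m}.Finite := by
  simpa only [hg.castVec_mem_natCast_smul_iff] using finite_setOf_castVec_mem (hQ.smul₀ (m : ℝ))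

lemma coeff_ehrhartSeries (hg : IsIntegralGauge Q g) (m : ℕ) :
    coeff m (ehrhartSeries Q) = ({y | g y ≤ m}.ncard : ℤ) := by
  simp only [_root_.coeff_ehrhartSeries, hg.castVec_mem_natCast_smul_iff]

lemma coeff_one_sub_X_mul_ehrhartSeries (hg : IsIntegralGauge Q g) (hQ : Bornology.IsBounded Q)
    (m : ℕ) : coeff m ((1 - X) * ehrhartSeries Q) = ({y | g y = m}.ncard : ℤ) := by
  rw [sub_mul, one_mul, map_sub]
  cases m with
  | zero => simp [hg.coeff_ehrhartSeries]
  | succ m =>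
    have hunion : {y | g y ≤ m + 1} = {y | g y ≤ m} ∪ {y | g y = m + 1} := by
      ext y; simp only [Set.mem_ofPred_eq, Set.mem_union]; omega
    have hdisj : Disjoint {y | g y ≤ m} {y | g y = m + 1} :=
      Set.disjoint_left.2 fun y (h₁ : g y ≤ m) (h₂ : g y = m + 1) => by omega
    rw [coeff_succ_X_mul, hg.coeff_ehrhartSeries, hg.coeff_ehrhartSeries, hunion,
      Set.ncard_union_eq hdisj (hg.finite_setOf_le hQ m)
        ((hg.finite_setOf_le hQ (m + 1)).subset fun y (h : g y = m + 1) => h.le)]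
    push_cast
    ring

lemma castVec_append_mem_smul_freeSum_iff (hg : IsIntegralGauge Q g) {P : Set (Fin p → ℝ)}
    (hP : Convex ℝ P) (hP0 : (0 : Fin p → ℝ) ∈ P) (hQ : Convex ℝ Q) (hQne : Q.Nonempty)
    (t : ℕ) (x : Fin p → ℤ) (y : Fin q → ℤ) :
    castVec (Fin.append x y) ∈ (t : ℝ) • freeSum P Q ↔
      g y ≤ t ∧ castVec x ∈ ((t - g y : ℕ) : ℝ) • P := by
  rw [castVec_append, append_mem_smul_freeSum_iff hP hQ ⟨0, hP0⟩ hQne t.cast_nonneg]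
  constructor
  · rintro ⟨a, b, ha, hb, hab, hx, hy⟩
    have hgb : (g y : ℝ) ≤ b := (hg y b hb).1 hy
    have hgt : g y ≤ t := by
      have : (g y : ℝ) ≤ t := by linarith
      exact_mod_cast this
    refine ⟨hgt, hP.smul_subset_smul_of_le hP0 ha ?_ hx⟩
    push_cast [hgt]
    linarith
  · rintro ⟨hgt, hx⟩
    exact ⟨_, g y, Nat.cast_nonneg _, Nat.cast_nonneg _, by push_cast [hgt]; ring, hx,
      (hg y _ (Nat.cast_nonneg _)).2 le_rfl⟩

open Finset.HasAntidiagonal in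
theorem ehrhartSeries_freeSum (hg : IsIntegralGauge Q g) {P : Set (Fin p → ℝ)}
    (hP : Convex ℝ P) (hP0 : (0 : Fin p → ℝ) ∈ P) (hPb : Bornology.IsBounded P)
    (hQ : Convex ℝ Q) (hQne : Q.Nonempty) (hQb : Bornology.IsBounded Q) :
    ehrhartSeries (freeSum P Q) = ehrhartSeries P * ((1 - X) * ehrhartSeries Q) := by
  ext t
  set piece : ℕ × ℕ → Set ((Fin p → ℤ) × (Fin q → ℤ)) :=
    fun kj => {x | castVec x ∈ (kj.1 : ℝ) • P} ×ˢ {y | g y = kj.2}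
  have hsplit : {z | castVec z ∈ (t : ℝ) • freeSum P Q} =
      Fin.appendEquiv p q '' ⋃ kj ∈ (antidiagonal t : Set (ℕ × ℕ)), piece kj := by
    ext z
    obtain ⟨⟨x, y⟩, rfl⟩ := (Fin.appendEquiv p q).surjective z
    simp only [(Fin.appendEquiv p q).injective.mem_set_image, Set.mem_ofPred_eq, Set.mem_iUnion,
      Set.mem_prod, Finset.mem_coe, mem_antidiagonal, piece]
    rw [show Fin.appendEquiv p q (x, y) = Fin.append x y from rfl,
      hg.castVec_append_mem_smul_freeSum_iff hP hP0 hQ hQne]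
    constructor
    · rintro ⟨hgt, hx⟩
      exact ⟨(t - g y, g y), Nat.sub_add_cancel hgt, hx, rfl⟩
    · rintro ⟨⟨k, j⟩, hkj, hx, rfl⟩
      exact ⟨by omega, by rwa [show t - g y = k by omega]⟩
  have hfinite : ∀ kj ∈ (antidiagonal t : Set (ℕ × ℕ)), (piece kj).Finite :=
    fun kj _ => (finite_setOf_castVec_mem (hPb.smul₀ _)).prod
      ((hg.finite_setOf_le hQb kj.2).subset fun y (h : g y = kj.2) => h.le)
  have hdisj : (antidiagonal t : Set (ℕ × ℕ)).PairwiseDisjoint piece := by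
    rintro ⟨k, j⟩ hkj ⟨k', j'⟩ hkj' hne
    simp only [Finset.mem_coe, mem_antidiagonal] at hkj hkj'
    refine Set.disjoint_prod.2 (Or.inr (Set.disjoint_left.2 fun y (h : g y = j) (h' : g y = j') =>
      hne ?_))
    rw [Prod.mk.injEq]
    omega
  rw [_root_.coeff_ehrhartSeries, hsplit, Set.ncard_image_of_injective _ (Equiv.injective _),
    (Finset.finite_toSet _).ncard_biUnion hfinite hdisj, finsum_mem_coe_finset, coeff_mul]
  push_cast
  refine Finset.sum_congr rfl fun kj _ => ?_
  rw [Set.ncard_prod, _root_.coeff_ehrhartSeries, hg.coeff_one_sub_X_mul_ehrhartSeries hQb]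
  push_cast
  rfl

end IsIntegralGauge

section Ssimplex

variable {d : ℕ}

def ssimplexProj (d : ℕ) : (Fin (d + 1) → ℝ) →ₗ[ℝ] (Fin d → ℝ) :=
  LinearMap.pi fun i =>
    LinearMap.proj (R := ℝ) (φ := fun _ => ℝ) i.castSucc - LinearMap.proj (Fin.last d)

lemma ssimplexProj_apply (w : Fin (d + 1) → ℝ) (i : Fin d) :
    ssimplexProj d w i = w i.castSucc - w (Fin.last d) :=
  rfl

lemma Ssimplex_eq_image_stdSimplex :
    Ssimplex d = ssimplexProj d '' stdSimplex ℝ (Fin (d + 1)) := by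
  rw [← convexHull_basis_eq_stdSimplex, LinearMap.image_convexHull, ← Set.range_comp, Ssimplex]
  congr 1
  ext y
  simp only [Set.mem_union, Set.mem_range, Set.mem_singleton_iff, Function.comp_apply]
  constructor
  · rintro (⟨i, rfl⟩ | rfl)
    · exact ⟨i.castSucc, funext fun j => by
        simp [ssimplexProj_apply, Fin.castSucc_inj, eq_comm, (Fin.castSucc_lt_last i).ne]⟩
    · exact ⟨Fin.last d, funext fun j => by
        simp [ssimplexProj_apply, (Fin.castSucc_lt_last j).ne']⟩
  · rintro ⟨i, rfl⟩
    induction i using Fin.lastCases with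
    | last => exact Or.inr (funext fun j => by
        simp [ssimplexProj_apply, (Fin.castSucc_lt_last j).ne'])
    | cast i => exact Or.inl ⟨i, funext fun j => by
        simp [ssimplexProj_apply, Fin.castSucc_inj, eq_comm, (Fin.castSucc_lt_last i).ne]⟩

lemma convex_Ssimplex (d : ℕ) : Convex ℝ (Ssimplex d) :=
  convex_convexHull ℝ _

lemma Ssimplex_nonempty (d : ℕ) : (Ssimplex d).Nonempty :=
  ⟨_, subset_convexHull ℝ _ (Or.inr rfl)⟩

lemma isBounded_Ssimplex (d : ℕ) : Bornology.IsBounded (Ssimplex d) :=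
  isBounded_convexHull.2 ((Set.finite_range _).union (Set.finite_singleton _)).isBounded

lemma mem_smul_Ssimplex_iff {μ : ℝ} (hμ : 0 ≤ μ) (y : Fin d → ℝ) :
    y ∈ μ • Ssimplex d ↔
      ∃ w : Fin (d + 1) → ℝ, (∀ i, 0 ≤ w i) ∧ ∑ i, w i = μ ∧ ssimplexProj d w = y := by
  rw [Ssimplex_eq_image_stdSimplex]
  constructor
  · rintro ⟨_, ⟨v, ⟨hv0, hv1⟩, rfl⟩, rfl⟩
    refine ⟨μ • v, fun i => mul_nonneg hμ (hv0 i), ?_, map_smul _ _ _⟩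
    simp only [Pi.smul_apply, smul_eq_mul, ← Finset.mul_sum, hv1, mul_one]
  · rintro ⟨w, hw0, hwμ, rfl⟩
    rcases hμ.eq_or_lt with rfl | hμ
    · obtain rfl : w = 0 := funext ((Finset.sum_eq_zero_iff_of_nonneg fun i _ => hw0 i).1 hwμ
        · (Finset.mem_univ _))
      rw [map_zero, ← Ssimplex_eq_image_stdSimplex, Set.zero_smul_set (Ssimplex_nonempty d)]
      rfl
    · refine ⟨_, ⟨μ⁻¹ • w, ⟨fun i => mul_nonneg (inv_nonneg.2 hμ.le) (hw0 i), ?_⟩, rfl⟩, ?_⟩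
      · simp only [Pi.smul_apply, smul_eq_mul, ← Finset.mul_sum, hwμ, inv_mul_cancel₀ hμ.ne']
      · show μ • ssimplexProj d (μ⁻¹ • w) = _
        rw [map_smul, smul_smul, mul_inv_cancel₀ hμ.ne', one_smul]

lemma sum_eq_sum_sub_last_add {R : Type*} [CommRing R] (w : Fin (d + 1) → R) :
    ∑ i, w i = ∑ i : Fin d, (w i.castSucc - w (Fin.last d)) + (d + 1) * w (Fin.last d) := by
  rw [Fin.sum_univ_castSucc, Finset.sum_sub_distrib, Finset.sum_const, Finset.card_univ,
    Fintype.card_fin, nsmul_eq_mul]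
  ring

/-- The least `a : ℕ` with `y + a • 1 ≥ 0`. -/
def ssimplexShift (y : Fin d → ℤ) : ℕ :=
  Finset.univ.sup fun i => (-y i).toNat

lemma le_add_ssimplexShift (y : Fin d → ℤ) (i : Fin d) : 0 ≤ y i + ssimplexShift y := by
  have : (-y i).toNat ≤ ssimplexShift y := Finset.le_sup (f := fun i => (-y i).toNat) (by simp)
  omega

lemma ssimplexShift_le {y : Fin d → ℤ} {a : ℝ} (ha : 0 ≤ a) (h : ∀ i, -(y i : ℝ) ≤ a) :
    (ssimplexShift y : ℝ) ≤ a := by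
  rw [← Nat.le_floor_iff ha]
  refine Finset.sup_le fun i _ => (Nat.le_floor_iff ha).2 ?_
  rcases le_total 0 (-y i) with hy | hy
  · have : (((-y i).toNat : ℤ) : ℝ) = -(y i : ℝ) := by
      rw [Int.toNat_of_nonneg hy, Int.cast_neg]
    exact_mod_cast this.le.trans (h i)
  · simpa [Int.toNat_of_nonpos hy] using ha

/-- The total weight `∑ w` of the barycentric coordinates `w = (y + a, a)` of `y` with respect
to the vertices of `Ssimplex d`, for the least admissible `a = ssimplexShift y`. -/
def ssimplexGauge (y : Fin d → ℤ) : ℕ :=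
  (∑ i, y i + (d + 1) * ssimplexShift y).toNat

lemma natCast_ssimplexGauge (y : Fin d → ℤ) :
    (ssimplexGauge y : ℤ) = ∑ i, y i + (d + 1) * ssimplexShift y := by
  refine Int.toNat_of_nonneg ?_
  have := Finset.sum_nonneg fun i (_ : i ∈ Finset.univ) => le_add_ssimplexShift y i
  rw [Finset.sum_add_distrib, Finset.sum_const, Finset.card_univ, Fintype.card_fin,
    nsmul_eq_mul] at this
  linarith [Int.natCast_nonneg (ssimplexShift y)]

lemma isIntegralGauge_Ssimplex (d : ℕ) :
    IsIntegralGauge (Ssimplex d) (ssimplexGauge (d := d)) := by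
  intro y μ hμ
  have hgauge : (ssimplexGauge y : ℝ) = ∑ i, (y i : ℝ) + (d + 1) * ssimplexShift y := by
    exact_mod_cast congrArg (Int.cast : ℤ → ℝ) (natCast_ssimplexGauge y)
  rw [mem_smul_Ssimplex_iff hμ, hgauge]
  constructor
  · rintro ⟨w, hw0, rfl, hwy⟩
    have hy : ∀ i, (y i : ℝ) = w i.castSucc - w (Fin.last d) := fun i =>
      (congrFun hwy i).symm
    have hshift : (ssimplexShift y : ℝ) ≤ w (Fin.last d) :=
      ssimplexShift_le (hw0 _) fun i => by linarith [hy i, hw0 i.castSucc]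
    rw [sum_eq_sum_sub_last_add w, ← Finset.sum_congr rfl fun i _ => hy i]
    gcongr
  · intro h
    have hya : ∀ i, (0 : ℝ) ≤ y i + ssimplexShift y := fun i => by
      exact_mod_cast le_add_ssimplexShift y i
    set a : ℝ := (ssimplexShift y : ℝ)
    set c : ℝ := (μ - (∑ i, (y i : ℝ) + (d + 1) * a)) / (d + 1)
    have hc : 0 ≤ c := div_nonneg (by linarith) (by positivity)
    have hdc : (d + 1) * c = μ - (∑ i, (y i : ℝ) + (d + 1) * a) :=
      mul_div_cancel₀ _ (by positivity)
    refine ⟨Fin.snoc (fun i => y i + a + c) (a + c), fun i => ?_, ?_, ?_⟩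
    · induction i using Fin.lastCases with
      | last => simp only [Fin.snoc_last]; positivity
      | cast i => simp only [Fin.snoc_castSucc]; linarith [hya i]
    · rw [sum_eq_sum_sub_last_add]
      simp only [Fin.snoc_castSucc, Fin.snoc_last, add_sub_add_right_eq_sub, add_sub_cancel_right]
      linear_combination hdc
    · funext i
      simp [ssimplexProj_apply, castVec]

def ssimplexProjInt (w : Fin (d + 1) → ℕ) : Fin d → ℤ :=
  fun i => w i.castSucc - w (Fin.last d)

lemma natCast_sum_eq_sum_ssimplexProjInt_add (w : Fin (d + 1) → ℕ) :
    ∑ i, (w i : ℤ) = ∑ i, ssimplexProjInt w i + (d + 1) * w (Fin.last d) :=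
  sum_eq_sum_sub_last_add _

lemma image_ssimplexProjInt (m : ℕ) :
    ssimplexProjInt '' {w : Fin (d + 1) → ℕ | ∑ i, w i ≤ m} = {y | ssimplexGauge y ≤ m} := by
  ext y
  simp only [Set.mem_image, Set.mem_ofPred_eq]
  constructor
  · rintro ⟨w, hw, rfl⟩
    have hshift : ssimplexShift (ssimplexProjInt w) ≤ w (Fin.last d) := by
      exact_mod_cast ssimplexShift_le (Nat.cast_nonneg _) fun i => by simp [ssimplexProjInt]
    refine le_trans ?_ hw
    zify
    rw [natCast_ssimplexGauge, natCast_sum_eq_sum_ssimplexProjInt_add]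
    gcongr
  · intro hy
    set w : Fin (d + 1) → ℕ := Fin.snoc (fun i => (y i + ssimplexShift y).toNat) (ssimplexShift y)
    have hwy : ssimplexProjInt w = y := funext fun i => by
      simp [w, ssimplexProjInt, Int.toNat_of_nonneg (le_add_ssimplexShift y i)]
    refine ⟨w, le_trans (le_of_eq ?_) hy, hwy⟩
    zify
    rw [natCast_ssimplexGauge, natCast_sum_eq_sum_ssimplexProjInt_add, hwy]
    simp [w]

/-- Two preimages differ by a constant `c`, which changes `∑ w` by `(d + 1) * c`. -/
lemma injOn_ssimplexProjInt {m : ℕ} (hm : m ≤ d) :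
    Set.InjOn ssimplexProjInt {w : Fin (d + 1) → ℕ | ∑ i, w i ≤ m} := by
  intro w hw w' hw' hww'
  simp only [Set.mem_ofPred_eq] at hw hw'
  have hsum := natCast_sum_eq_sum_ssimplexProjInt_add w
  have hsum' := natCast_sum_eq_sum_ssimplexProjInt_add w'
  rw [hww'] at hsum
  have hdiff : (d + 1 : ℤ) * (w (Fin.last d) - w' (Fin.last d)) =
      ∑ i, (w i : ℤ) - ∑ i, (w' i : ℤ) := by
    linear_combination hsum' - hsum
  have hbound : |∑ i, (w i : ℤ) - ∑ i, (w' i : ℤ)| < d + 1 := by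
    zify at hw hw'
    have : (0 : ℤ) ≤ ∑ i, (w i : ℤ) := by positivity
    have : (0 : ℤ) ≤ ∑ i, (w' i : ℤ) := by positivity
    rw [abs_lt]
    constructor <;> linarith
  have hlast : (w (Fin.last d) : ℤ) = w' (Fin.last d) := by
    rw [Int.eq_zero_of_abs_lt_dvd ⟨_, hdiff.symm⟩ hbound] at hdiff
    linarith [(mul_eq_zero.1 hdiff).resolve_left (by positivity)]
  funext i
  induction i using Fin.lastCases with
  | last => exact_mod_cast hlast
  | cast i =>
    have := congrFun hww' i
    simp only [ssimplexProjInt] at this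
    omega

lemma coeff_ehrhartSeries_Ssimplex {m : ℕ} (hm : m ≤ d) :
    coeff m (ehrhartSeries (Ssimplex d)) = coeff m ((mk 1 : PowerSeries ℤ) ^ (d + 2)) := by
  rw [(isIntegralGauge_Ssimplex d).coeff_ehrhartSeries, ← image_ssimplexProjInt,
    (injOn_ssimplexProjInt hm).ncard_image, ncard_setOf_sum_le, mk_one_pow_eq_mk_choose_add,
    coeff_mk, Nat.choose_symm_add]

end Ssimplex

noncomputable def hStarSeries {n : ℕ} (P : Set (Fin n → ℝ)) : PowerSeries ℤ :=
  (1 - X) ^ (n + 1) * ehrhartSeries P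

/-- Braun's formula. -/
theorem IsIntegralGauge.hStarSeries_freeSum {p q : ℕ} {Q : Set (Fin q → ℝ)}
    {g : (Fin q → ℤ) → ℕ} (hg : IsIntegralGauge Q g) {P : Set (Fin p → ℝ)}
    (hP : Convex ℝ P) (hP0 : (0 : Fin p → ℝ) ∈ P) (hPb : Bornology.IsBounded P)
    (hQ : Convex ℝ Q) (hQne : Q.Nonempty) (hQb : Bornology.IsBounded Q) :
    hStarSeries (freeSum P Q) = hStarSeries P * hStarSeries Q := by
  rw [hStarSeries, hg.ehrhartSeries_freeSum hP hP0 hPb hQ hQne hQb, hStarSeries, hStarSeries]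
  ring

lemma X_pow_dvd_hStarSeries_Ssimplex_sub (d : ℕ) :
    X ^ (d + 1) ∣ hStarSeries (Ssimplex d) - mk 1 := by
  have hfactor : hStarSeries (Ssimplex d) - mk 1 =
      (1 - X) ^ (d + 1) * (ehrhartSeries (Ssimplex d) - mk 1 ^ (d + 2)) := by
    rw [hStarSeries, mul_sub, pow_succ (mk 1) (d + 1), ← mul_assoc, ← mul_pow, mul_comm (1 - X),
      mk_one_mul_one_sub_eq_one, one_pow, one_mul]
  rw [hfactor]
  refine Dvd.dvd.mul_left (X_pow_dvd_iff.2 fun m hm => ?_) _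
  rw [map_sub, coeff_ehrhartSeries_Ssimplex (by omega), sub_self]

section IterFreeSum

variable {n : ℕ} {Q : Set (Fin n → ℝ)} {d : ℕ}

lemma iff_of_cast_set {a b : ℕ} (h : a = b) (e : Set (Fin a → ℝ) = Set (Fin b → ℝ))
    (Φ : ∀ m, Set (Fin m → ℝ) → Prop) (P : Set (Fin a → ℝ)) : Φ b (cast e P) ↔ Φ a P := by
  subst h
  rfl

lemma iterFreeSum_zero_iff (Φ : ∀ m, Set (Fin m → ℝ) → Prop) :
    Φ _ (iterFreeSum Q d 0) ↔ Φ n Q :=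
  iff_of_cast_set (by rw [Nat.zero_mul, Nat.add_zero]) _ Φ Q

lemma iterFreeSum_succ_iff (Φ : ∀ m, Set (Fin m → ℝ) → Prop) (k : ℕ) :
    Φ _ (iterFreeSum Q d (k + 1)) ↔ Φ _ (freeSum (iterFreeSum Q d k) (Ssimplex d)) :=
  iff_of_cast_set (by ring) _ Φ _

lemma convex_iterFreeSum (hQ : Convex ℝ Q) : ∀ k, Convex ℝ (iterFreeSum Q d k)
  | 0 => (iterFreeSum_zero_iff fun _ S => Convex ℝ S).2 hQ
  | k + 1 => (iterFreeSum_succ_iff (fun _ S => Convex ℝ S) k).2 (convex_freeSum _ _)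

lemma zero_mem_iterFreeSum (hQ : (0 : Fin n → ℝ) ∈ Q) :
    ∀ k, (0 : Fin (n + k * d) → ℝ) ∈ iterFreeSum Q d k
  | 0 => (iterFreeSum_zero_iff fun _ S => 0 ∈ S).2 hQ
  | k + 1 => (iterFreeSum_succ_iff (fun _ S => 0 ∈ S) k).2
      (zero_mem_freeSum _ (zero_mem_iterFreeSum hQ k))

lemma isBounded_iterFreeSum (hQ : Bornology.IsBounded Q) :
    ∀ k, Bornology.IsBounded (iterFreeSum Q d k)
  | 0 => (iterFreeSum_zero_iff fun _ S => Bornology.IsBounded S).2 hQ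
  | k + 1 => (iterFreeSum_succ_iff (fun _ S => Bornology.IsBounded S) k).2
      (isBounded_freeSum (isBounded_iterFreeSum hQ k) (isBounded_Ssimplex d))

lemma hStarSeries_iterFreeSum (hQ : Convex ℝ Q) (hQ0 : (0 : Fin n → ℝ) ∈ Q)
    (hQb : Bornology.IsBounded Q) :
    ∀ k, hStarSeries (iterFreeSum Q d k) = hStarSeries Q * hStarSeries (Ssimplex d) ^ k
  | 0 => (iterFreeSum_zero_iff fun _ S => hStarSeries S = _).2 (by rw [pow_zero, mul_one])
  | k + 1 => (iterFreeSum_succ_iff (fun _ S => hStarSeries S = _) k).2 <| by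
      rw [(isIntegralGauge_Ssimplex d).hStarSeries_freeSum (convex_iterFreeSum hQ k)
        (zero_mem_iterFreeSum hQ0 k) (isBounded_iterFreeSum hQb k) (convex_Ssimplex d)
        (Ssimplex_nonempty d) (isBounded_Ssimplex d), hStarSeries_iterFreeSum hQ hQ0 hQb k,
        pow_succ, mul_assoc]

end IterFreeSum

lemma IsLatticePolytope.convex {n : ℕ} {Q : Set (Fin n → ℝ)} (hQ : IsLatticePolytope Q) :
    Convex ℝ Q := by
  obtain ⟨V, rfl⟩ := hQ
  exact convex_convexHull ℝ _

lemma IsLatticePolytope.isBounded {n : ℕ} {Q : Set (Fin n → ℝ)} (hQ : IsLatticePolytope Q) :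
    Bornology.IsBounded Q := by
  obtain ⟨V, rfl⟩ := hQ
  exact isBounded_convexHull.2 (V.finite_toSet.image _).isBounded

theorem stmt4_general {n : ℕ} (Q : Set (Fin n → ℝ))
    (hQ : IsLatticePolytope Q)
    (h0 : (0 : Fin n → ℝ) ∈ interior Q) (k : ℕ) :
    ∃ F : PowerSeries ℤ,
      (1 - PowerSeries.X) ^ k * F = (1 - PowerSeries.X) ^ (n + 1) * ehrhartSeries Q ∧
      ∀ j : ℕ, ∃ N : ℕ, ∀ d : ℕ, N ≤ d → 1 ≤ d →
        PowerSeries.coeff j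
          ((1 - PowerSeries.X) ^ (n + k * d + 1) * ehrhartSeries (iterFreeSum Q d k)) =
          PowerSeries.coeff j F := by
  refine ⟨hStarSeries Q * mk 1 ^ k, ?_, fun j => ⟨j, fun d hjd _ => ?_⟩⟩
  · rw [mul_left_comm, ← mul_pow, mul_comm (1 - X), mk_one_mul_one_sub_eq_one, one_pow, mul_one]
    rfl
  · have hdvd : X ^ (j + 1) ∣ hStarSeries (iterFreeSum Q d k) - hStarSeries Q * mk 1 ^ k := by
      rw [hStarSeries_iterFreeSum hQ.convex (interior_subset h0) hQ.isBounded, ← mul_sub]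
      exact ((pow_dvd_pow X (by omega)).trans ((X_pow_dvd_hStarSeries_Ssimplex_sub d).trans
        (sub_dvd_pow_sub_pow _ _ k))).mul_left _
    exact sub_eq_zero.1 (by rw [← map_sub]; exact X_pow_dvd_iff.1 hdvd j j.lt_succ_self)

theorem stmt4 {n : ℕ} (Q : Set (Fin n → ℝ))
    (hQ : IsLatticePolytope Q) (hQfull : affineSpan ℝ Q = ⊤)
    (h0 : (0 : Fin n → ℝ) ∈ interior Q) (k : ℕ) (hk : 1 ≤ k) :
    ∃ F : PowerSeries ℤ,
      (1 - PowerSeries.X) ^ k * F = (1 - PowerSeries.X) ^ (n + 1) * ehrhartSeries Q ∧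
      ∀ j : ℕ, ∃ N : ℕ, ∀ d : ℕ, N ≤ d → 1 ≤ d →
        PowerSeries.coeff j
          ((1 - PowerSeries.X) ^ (n + k * d + 1) * ehrhartSeries (iterFreeSum Q d k)) =
          PowerSeries.coeff j F :=
  stmt4_general Q hQ h0 k
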